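/- Let H⁰, H¹, H² be finite-dimensional vector spaces arising from short exact sequences 0 → C¹(Wⁿ⁻¹) → Hⁿ → C⁰(Wⁿ) → 0 for n ≥ 0 (with W⁻¹ = 0), where for each finite-dimensional vector space W with commuting endomorphisms φ, ψ we set C⁰(W) = ker(1-φ) and C¹(W) = coker(1-φ), and ψ induces compatible maps everywhere. Then the alternating sum Σₙ (-1)ⁿ Tr(ψ | Hⁿ) = 0, provided only finitely many Wⁿ are nonzero. -/

import Mathlib

/-!
Traces are additive along ψ-equivariant short exact sequences. Writing kₙ and cₙ for the
traces of ψ on ker(1 - φ) and coker(1 - φ) on Wⁿ, this gives Tr(ψ | H⁰) = k₀ and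
Tr(ψ | Hⁿ⁺¹) = cₙ + kₙ₊₁. Moreover kₙ = cₙ: splitting Wⁿ along ker → Wⁿ → range and along
range → Wⁿ → coker, both kₙ and cₙ equal Tr(ψ | Wⁿ) - Tr(ψ | range(1 - φ)). The alternating
sum therefore telescopes to ±c_(N-1), which vanishes since coker(1 - φ) on W^(N-1) embeds
into H^N = 0.
-/

open LinearMap

section ShortExact

variable {K A H B : Type*} [Field K] [AddCommGroup A] [Module K A] [AddCommGroup H] [Module K H]
  [AddCommGroup B] [Module K B] {i : A →ₗ[K] H} {p : H →ₗ[K] B}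

theorem Function.Exact.exists_retraction_section (hexact : Function.Exact i p)
    (hi : Function.Injective i) (hp : Function.Surjective p) :
    ∃ (r : H →ₗ[K] A) (s : B →ₗ[K] H),
      r ∘ₗ i = LinearMap.id ∧ p ∘ₗ s = LinearMap.id ∧ i ∘ₗ r + s ∘ₗ p = LinearMap.id := by
  obtain ⟨s, hs⟩ := p.exists_rightInverse_of_surjective (range_eq_top.mpr hp)
  obtain ⟨e, rfl, rfl⟩ := hexact.splitSurjectiveEquiv hi ⟨s, hs⟩
  refine ⟨fst K A B ∘ₗ e.toLinearMap, e.symm.toLinearMap ∘ₗ inr K A B, ?_, ?_, ?_⟩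
  · ext; simp
  · ext; simp
  · ext x
    apply e.injective
    ext <;> simp

theorem LinearMap.trace_eq_add_of_exact [FiniteDimensional K H] (hi : Function.Injective i)
    (hexact : Function.Exact i p) (hp : Function.Surjective p) {ψA : Module.End K A}
    {ψH : Module.End K H} {ψB : Module.End K B} (hiψ : ψH ∘ₗ i = i ∘ₗ ψA)
    (hpψ : p ∘ₗ ψH = ψB ∘ₗ p) :
    trace K H ψH = trace K A ψA + trace K B ψB := by
  have : FiniteDimensional K A := Module.Finite.of_injective i hi
  have : FiniteDimensional K B := Module.Finite.of_surjective p hp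
  obtain ⟨r, s, hri, hps, hsum⟩ := hexact.exists_retraction_section hi hp
  calc trace K H ψH
      = trace K H ((ψH ∘ₗ i) ∘ₗ r) + trace K H ((ψH ∘ₗ s) ∘ₗ p) := by
        rw [← map_add, comp_assoc, comp_assoc, ← comp_add, hsum, comp_id]
    _ = trace K A (r ∘ₗ ψH ∘ₗ i) + trace K B (p ∘ₗ ψH ∘ₗ s) := by
        rw [trace_comp_comm' r, trace_comp_comm' p]
    _ = trace K A ψA + trace K B ψB := by
        rw [hiψ, ← comp_assoc, hri, id_comp, ← comp_assoc, hpψ, comp_assoc, hps, comp_id]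

end ShortExact

theorem LinearMap.trace_restrict_ker_eq_trace_mapQ_range {K V : Type*} [Field K]
    [AddCommGroup V] [Module K V] [FiniteDimensional K V] {f ψ : Module.End K V}
    (hcomm : ψ * f = f * ψ) (hker : ∀ v ∈ ker f, ψ v ∈ ker f)
    (hrange : range f ≤ (range f).comap ψ) :
    trace K (ker f) (ψ.restrict hker) =
      trace K (V ⧸ range f) ((range f).mapQ (range f) ψ hrange) := by
  have hrange' : ∀ v ∈ range f, ψ v ∈ range f := fun _ hv => hrange hv
  have hsplit_ker : trace K V ψ = trace K (ker f) (ψ.restrict hker) +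
      trace K (range f) (ψ.restrict hrange') :=
    trace_eq_add_of_exact (ker f).injective_subtype
      (exact_iff.mpr (by rw [ker_rangeRestrict, Submodule.range_subtype]))
      f.surjective_rangeRestrict (by ext; rfl) (by ext; simp [← Module.End.mul_apply, hcomm])
  have hsplit_coker : trace K V ψ = trace K (range f) (ψ.restrict hrange') +
      trace K (V ⧸ range f) ((range f).mapQ (range f) ψ hrange) :=
    trace_eq_add_of_exact (range f).injective_subtype (exact_subtype_mkQ (range f))
      (range f).mkQ_surjective (by ext; rfl) (by ext; rfl)
  rw [hsplit_ker, add_comm] at hsplit_coker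
  exact add_left_cancel hsplit_coker

theorem sum_range_succ_neg_one_pow_mul_of_eq_add {R : Type*} [CommRing R] {t a : ℕ → R}
    (h0 : t 0 = a 0) (hsucc : ∀ n, t (n + 1) = a n + a (n + 1)) (M : ℕ) :
    ∑ n ∈ Finset.range (M + 1), (-1) ^ n * t n = (-1) ^ M * a M := by
  induction M with
  | zero => simp [h0]
  | succ M ih =>
    rw [Finset.sum_range_succ, ih, hsucc, pow_succ]
    ring

set_option maxHeartbeats 1000000 in
theorem stmt_16_general {K : Type*} [Field K]
    (W H : ℕ → Type) [∀ n, AddCommGroup (W n)] [∀ n, Module K (W n)]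
    [∀ n, FiniteDimensional K (W n)]
    [∀ n, AddCommGroup (H n)] [∀ n, Module K (H n)] [∀ n, FiniteDimensional K (H n)]
    (φ ψ : ∀ n, Module.End K (W n)) (hcomm : ∀ n, ψ n * φ n = φ n * ψ n)
    (ψH : ∀ n, Module.End K (H n))
    (hker : ∀ n, ∀ v ∈ LinearMap.ker (1 - φ n), ψ n v ∈ LinearMap.ker (1 - φ n))
    (hrange : ∀ n, LinearMap.range (1 - φ n) ≤ (LinearMap.range (1 - φ n)).comap (ψ n))
    -- the short exact sequences 0 → C¹(Wⁿ) → H^{n+1} → C⁰(W^{n+1}) → 0 :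
    (i : ∀ n, (W n ⧸ LinearMap.range (1 - φ n)) →ₗ[K] H (n + 1))
    (p : ∀ n, H (n + 1) →ₗ[K] LinearMap.ker (1 - φ (n + 1)))
    (hi : ∀ n, Function.Injective (i n))
    (hexact : ∀ n, Function.Exact (i n) (p n))
    (hp : ∀ n, Function.Surjective (p n))
    -- the case n = 0 (with W⁻¹ = 0) : H⁰ ≅ C⁰(W⁰) :
    (e0 : H 0 ≃ₗ[K] LinearMap.ker (1 - φ 0))
    -- compatibility of all maps with ψ :
    (hcompat0 : ∀ v : H 0, e0 (ψH 0 v) = ((ψ 0).restrict (hker 0) :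
        LinearMap.ker (1 - φ 0) →ₗ[K] LinearMap.ker (1 - φ 0)) (e0 v))
    (hcompati : ∀ n, (ψH (n + 1)) ∘ₗ (i n) =
      (i n) ∘ₗ Submodule.mapQ (LinearMap.range (1 - φ n)) (LinearMap.range (1 - φ n)) (ψ n)
        (hrange n))
    (hcompatp : ∀ n, (p n) ∘ₗ (ψH (n + 1)) = ((ψ (n + 1)).restrict (hker (n + 1)) :
        LinearMap.ker (1 - φ (n + 1)) →ₗ[K] LinearMap.ker (1 - φ (n + 1))) ∘ₗ (p n))
    -- only finitely many Wⁿ (hence Hⁿ) are nonzero :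
    (N : ℕ) (hvanH : ∀ n, N ≤ n → Subsingleton (H n)) :
    ∑ n ∈ Finset.range N, (-1 : K) ^ n * LinearMap.trace K (H n) (ψH n) = 0 := by
  have hcomm' : ∀ n, ψ n * (1 - φ n) = (1 - φ n) * ψ n := fun n => by
    rw [mul_sub, sub_mul, mul_one, one_mul, hcomm n]
  set c : ℕ → K := fun n => trace K _ ((range (1 - φ n)).mapQ _ (ψ n) (hrange n))
  have hker_coker : ∀ n, trace K _ ((ψ n).restrict (hker n)) = c n := fun n =>
    trace_restrict_ker_eq_trace_mapQ_range (hcomm' n) (hker n) (hrange n)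
  have htrace_zero : trace K (H 0) (ψH 0) = c 0 := by
    rw [← hker_coker, ← trace_conj' (ψH 0) e0]
    congr 1
    ext
    simp [hcompat0]
  have htrace_succ : ∀ n, trace K (H (n + 1)) (ψH (n + 1)) = c n + c (n + 1) := fun n => by
    rw [trace_eq_add_of_exact (hi n) (hexact n) (hp n) (hcompati n) (hcompatp n), hker_coker]
  cases N with
  | zero => simp
  | succ M =>
    have : Subsingleton (H (M + 1)) := hvanH (M + 1) le_rfl
    have : Subsingleton (W M ⧸ range (1 - φ M)) := (hi M).subsingleton
    rw [sum_range_succ_neg_one_pow_mul_of_eq_add htrace_zero htrace_succ,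
      show c M = 0 by simp only [c, Subsingleton.elim (Submodule.mapQ _ _ _ _) 0, map_zero],
      mul_zero]

set_option maxHeartbeats 1000000 in
theorem stmt_16 {K : Type*} [Field K]
    (W H : ℕ → Type) [∀ n, AddCommGroup (W n)] [∀ n, Module K (W n)]
    [∀ n, FiniteDimensional K (W n)]
    [∀ n, AddCommGroup (H n)] [∀ n, Module K (H n)] [∀ n, FiniteDimensional K (H n)]
    (φ ψ : ∀ n, Module.End K (W n)) (hcomm : ∀ n, ψ n * φ n = φ n * ψ n)
    (ψH : ∀ n, Module.End K (H n))
    (hker : ∀ n, ∀ v ∈ LinearMap.ker (1 - φ n), ψ n v ∈ LinearMap.ker (1 - φ n))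
    (hrange : ∀ n, LinearMap.range (1 - φ n) ≤ (LinearMap.range (1 - φ n)).comap (ψ n))
    -- the short exact sequences 0 → C¹(Wⁿ) → H^{n+1} → C⁰(W^{n+1}) → 0 :
    (i : ∀ n, (W n ⧸ LinearMap.range (1 - φ n)) →ₗ[K] H (n + 1))
    (p : ∀ n, H (n + 1) →ₗ[K] LinearMap.ker (1 - φ (n + 1)))
    (hi : ∀ n, Function.Injective (i n))
    (hexact : ∀ n, Function.Exact (i n) (p n))
    (hp : ∀ n, Function.Surjective (p n))
    -- the case n = 0 (with W⁻¹ = 0) : H⁰ ≅ C⁰(W⁰) :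
    (e0 : H 0 ≃ₗ[K] LinearMap.ker (1 - φ 0))
    -- compatibility of all maps with ψ :
    (hcompat0 : ∀ v : H 0, e0 (ψH 0 v) = ((ψ 0).restrict (hker 0) :
        LinearMap.ker (1 - φ 0) →ₗ[K] LinearMap.ker (1 - φ 0)) (e0 v))
    (hcompati : ∀ n, (ψH (n + 1)) ∘ₗ (i n) =
      (i n) ∘ₗ Submodule.mapQ (LinearMap.range (1 - φ n)) (LinearMap.range (1 - φ n)) (ψ n)
        (hrange n))
    (hcompatp : ∀ n, (p n) ∘ₗ (ψH (n + 1)) = ((ψ (n + 1)).restrict (hker (n + 1)) :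
        LinearMap.ker (1 - φ (n + 1)) →ₗ[K] LinearMap.ker (1 - φ (n + 1))) ∘ₗ (p n))
    -- only finitely many Wⁿ (hence Hⁿ) are nonzero :
    (N : ℕ) (hvanW : ∀ n, N ≤ n → Subsingleton (W n)) (hvanH : ∀ n, N ≤ n → Subsingleton (H n)) :
    ∑ n ∈ Finset.range N, (-1 : K) ^ n * LinearMap.trace K (H n) (ψH n) = 0 :=
  stmt_16_general W H φ ψ hcomm ψH hker hrange i p hi hexact hp e0 hcompat0 hcompati hcompatp N
    hvanH
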